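/- arXiv:2008.06025 — 3 statements merged into one kernel-verified Lean document; each statement's English description precedes it below -/
import Mathlib

section
/- For every integer d ≥ 2, every nonempty sibling σ_d-invariant lamination contains a leaf ℓ with |ℓ| ≥ 1/(d+1). -/
noncomputable section

open Filter Metric

/-- Points of the unit circle `S`. -/
abbrev SPt : Type := {z : ℂ // ‖z‖ = 1}

/-- The unit circle, as a subset of `ℂ`. -/
def circleSet : Set ℂ := {z : ℂ | ‖z‖ = 1}

/-- The open unit disk `D`. -/
def openDisk : Set ℂ := Metric.ball (0 : ℂ) 1

/-- The map `σ_d : S → S`, `z ↦ z ^ d`. -/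
def sigmaS (d : ℕ) (z : SPt) : SPt :=
  ⟨(z : ℂ) ^ d, by rw [norm_pow, z.2, one_pow]⟩

/-- A chord, identified with the unordered pair of its endpoints. -/
abbrev Chord : Type := Sym2 SPt

/-- The closed straight segment in `ℂ` spanned by a chord. -/
def chordSet : Chord → Set ℂ :=
  Sym2.lift ⟨fun a b => segment ℝ (a : ℂ) (b : ℂ), fun a b => segment_symm ℝ _ _⟩

/-- The image chord `σ_d(ℓ)`. -/
def chordMap (d : ℕ) : Chord → Chord := Sym2.map (sigmaS d)

/-- Two (distinct) chords cross if they intersect in the open unit disk. -/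
def Cross (c₁ c₂ : Chord) : Prop :=
  c₁ ≠ c₂ ∧ (chordSet c₁ ∩ chordSet c₂ ∩ openDisk).Nonempty

/-- The length `|ℓ|` of a chord: the normalized length of the shorter arc
subtended by its endpoints (total circle length 1). -/
def chordLength : Chord → ℝ :=
  Sym2.lift ⟨fun a b => |Complex.arg ((a : ℂ) / (b : ℂ))| / (2 * Real.pi), by
    intro a b
    dsimp only
    have h : ((b : ℂ) / (a : ℂ)) = ((a : ℂ) / (b : ℂ))⁻¹ := (inv_div _ _).symm
    rw [h, Complex.arg_inv]
    split_ifs with hpi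
    · rw [hpi]
    · rw [abs_neg]⟩

/-- A lamination: a family of pairwise non-crossing chords containing all
degenerate chords, whose union is compact. -/
structure Lamination : Type where
  leaves : Set Chord
  no_cross : ∀ ℓ₁ ∈ leaves, ∀ ℓ₂ ∈ leaves, ¬ Cross ℓ₁ ℓ₂
  diag_mem : ∀ z : SPt, Sym2.diag z ∈ leaves
  plus_compact : IsCompact (⋃ ℓ ∈ leaves, chordSet ℓ)

/-- `Λ⁺`, the union of all leaves of `Λ`. -/
def Lamination.plus (Λ : Lamination) : Set ℂ := ⋃ ℓ ∈ Λ.leaves, chordSet ℓ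

/-- Sibling `σ_d`-invariance of a lamination. -/
def Lamination.Invariant (Λ : Lamination) (d : ℕ) : Prop :=
  (∀ ℓ ∈ Λ.leaves, chordMap d ℓ ∈ Λ.leaves) ∧
  (∀ ℓ ∈ Λ.leaves, ∃ p ∈ Λ.leaves, chordMap d p = ℓ) ∧
  (∀ ℓ ∈ Λ.leaves, ¬ (chordMap d ℓ).IsDiag →
    ∃ s : Fin d → Chord, (∃ i, s i = ℓ) ∧ (∀ i, s i ∈ Λ.leaves) ∧
      Function.Injective s ∧
      (∀ i j, i ≠ j → chordSet (s i) ∩ chordSet (s j) = ∅) ∧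
      (∀ i, chordMap d (s i) = chordMap d ℓ))

/-- A lamination is nonempty if it has a nondegenerate leaf. -/
def Lamination.NonemptyLam (Λ : Lamination) : Prop := ∃ ℓ ∈ Λ.leaves, ¬ ℓ.IsDiag

/-- A gap of `Λ`: the closure of a connected component of `D ∖ Λ⁺`. -/
def IsGap (Λ : Lamination) (G : Set ℂ) : Prop :=
  ∃ x ∈ openDisk \ Λ.plus, G = closure (connectedComponentIn (openDisk \ Λ.plus) x)

/-- A finite gap: a gap meeting the circle in finitely many points. -/
def FiniteGap (Λ : Lamination) (G : Set ℂ) : Prop := IsGap Λ G ∧ (G ∩ circleSet).Finite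

/-- `ℓ` is an edge of `G`: a maximal nondegenerate straight segment (with
endpoints on the circle) contained in the boundary of `G`. -/
def IsEdge (G : Set ℂ) (ℓ : Chord) : Prop :=
  ¬ ℓ.IsDiag ∧ chordSet ℓ ⊆ frontier G ∧
    ∀ ℓ' : Chord, chordSet ℓ ⊆ chordSet ℓ' → chordSet ℓ' ⊆ frontier G →
      chordSet ℓ' = chordSet ℓ

/-- `σ_d(G)` for a set `G`: the convex hull of the image of `G ∩ S`. -/
def gapImage (d : ℕ) (G : Set ℂ) : Set ℂ :=
  convexHull ℝ ((fun z : ℂ => z ^ d) '' (G ∩ circleSet))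

/-- A lap of `Λ`: a finite gap, or (the segment of) a nondegenerate leaf not
contained in the boundary of a finite gap. -/
def IsLap (Λ : Lamination) (G : Set ℂ) : Prop :=
  FiniteGap Λ G ∨
    ∃ ℓ ∈ Λ.leaves, ¬ ℓ.IsDiag ∧ G = chordSet ℓ ∧
      ∀ H : Set ℂ, FiniteGap Λ H → ¬ chordSet ℓ ⊆ frontier H

/-- Distance between chords (Hausdorff distance between their segments). -/
def chordDist (c₁ c₂ : Chord) : ℝ := Metric.hausdorffDist (chordSet c₁) (chordSet c₂)

/-- Hausdorff convergence `Λ_i → Λ` of laminations (leaf sets converge in the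
Hausdorff metric on the compact space of chords). -/
def LamTendsto (Λi : ℕ → Lamination) (Λ : Lamination) : Prop :=
  ∀ ε > (0 : ℝ), ∀ᶠ n in atTop,
    (∀ ℓ ∈ (Λi n).leaves, ∃ ℓ' ∈ Λ.leaves, chordDist ℓ ℓ' < ε) ∧
    (∀ ℓ' ∈ Λ.leaves, ∃ ℓ ∈ (Λi n).leaves, chordDist ℓ ℓ' < ε)

/-- An isolated leaf of `Λ`: some neighborhood of it in the space of chords
contains no other leaf of `Λ`. -/
def IsolatedLeaf (Λ : Lamination) (ℓ : Chord) : Prop :=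
  ℓ ∈ Λ.leaves ∧ ∃ ε > (0 : ℝ), ∀ ℓ' ∈ Λ.leaves, chordDist ℓ' ℓ < ε → ℓ' = ℓ

/-- A perfect lamination: no isolated leaves. -/
def Lamination.PerfectLam (Λ : Lamination) : Prop := ∀ ℓ ∈ Λ.leaves, ¬ IsolatedLeaf Λ ℓ

/-- A set of chords closed under limits. -/
def ClosedChordSet (P : Set Chord) : Prop :=
  ∀ f : ℕ → Chord, (∀ n, f n ∈ P) → ∀ c : Chord,
    Tendsto (fun n => chordDist (f n) c) atTop (nhds 0) → c ∈ P

/-- A perfect set of chords: closed and with no isolated points. -/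
def PerfectChordSet (P : Set Chord) : Prop :=
  ClosedChordSet P ∧ ∀ c ∈ P, ∀ ε > (0 : ℝ), ∃ c' ∈ P, c' ≠ c ∧ chordDist c c' < ε

/-- The perfect part `Λᵖ` of `Λ`: the maximal perfect subset of its leaf set. -/
def perfectPart (Λ : Lamination) : Set Chord :=
  ⋃₀ {P : Set Chord | P ⊆ Λ.leaves ∧ PerfectChordSet P}

/-- A countable lamination: countably many nondegenerate leaves. -/
def Lamination.CountableLam (Λ : Lamination) : Prop :=
  {ℓ ∈ Λ.leaves | ¬ ℓ.IsDiag}.Countable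

/-- `Λc` is a chief of `Λ`: a minimal-by-inclusion nonempty sibling
`σ_d`-invariant sublamination of `Λ`. -/
def IsChiefOf (d : ℕ) (Λc Λ : Lamination) : Prop :=
  Λc.leaves ⊆ Λ.leaves ∧ Λc.Invariant d ∧ Λc.NonemptyLam ∧
    ∀ Λ' : Lamination, Λ'.leaves ⊆ Λc.leaves → Λ'.Invariant d → Λ'.NonemptyLam →
      Λ'.leaves = Λc.leaves

/-- A clean lamination: distinct non-disjoint leaves lie on the boundary of a
common finite gap. -/
def Lamination.Clean (Λ : Lamination) : Prop :=
  ∀ ℓ₁ ∈ Λ.leaves, ∀ ℓ₂ ∈ Λ.leaves, ℓ₁ ≠ ℓ₂ → (chordSet ℓ₁ ∩ chordSet ℓ₂).Nonempty →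
    ∃ G : Set ℂ, FiniteGap Λ G ∧ chordSet ℓ₁ ⊆ frontier G ∧ chordSet ℓ₂ ⊆ frontier G

/-- A limit lamination: a sibling `σ_3`-invariant lamination that is a limit of
clean sibling `σ_3`-invariant laminations. -/
def IsLimitLam (Λ : Lamination) : Prop :=
  Λ.Invariant 3 ∧
    ∃ Λi : ℕ → Lamination, (∀ n, (Λi n).Invariant 3 ∧ (Λi n).Clean) ∧ LamTendsto Λi Λ

/-- A chief: a chief of some nonempty limit lamination. -/
def IsChief (Λc : Lamination) : Prop :=
  ∃ Λ : Lamination, IsLimitLam Λ ∧ Λ.NonemptyLam ∧ IsChiefOf 3 Λc Λ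

/-- A `σ_3`-critical chord. -/
def IsCritChord (c : Chord) : Prop := ¬ c.IsDiag ∧ (chordMap 3 c).IsDiag

/-- An unordered pair of chords (candidate critical portrait). -/
abbrev Portrait : Type := Sym2 Chord

/-- A cubic critical portrait: an unordered pair of non-crossing
`σ_3`-critical chords. -/
def IsPortrait (K : Portrait) : Prop :=
  ∃ c y : Chord, K = s(c, y) ∧ IsCritChord c ∧ IsCritChord y ∧ ¬ Cross c y

/-- The space `CrP` of all cubic critical portraits. -/
def CrP : Set Portrait := {K | IsPortrait K}

/-- `I(ℓ)` for a critical chord `ℓ`: the open arc of length 1/3 cut off by `ℓ`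
(the points of the circle strictly separated from the center by `ℓ`). -/
def Iarc (ℓ : Chord) : Set SPt :=
  {z : SPt | (z : ℂ) ∉ chordSet ℓ ∧ (segment ℝ (0 : ℂ) (z : ℂ) ∩ chordSet ℓ).Nonempty}

/-- The forward orbit `{σ_3ⁿ(ℓ) : n ≥ 1}` of a critical chord `ℓ` (each image
is a single point of the circle). -/
def critOrbit (ℓ : Chord) : Set SPt :=
  {z : SPt | ∃ n, 1 ≤ n ∧ ∃ a ∈ ℓ, (sigmaS 3)^[n] a = z}

/-- A weak critical portrait. -/
def IsWeak (K : Portrait) : Prop :=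
  IsPortrait K ∧ ∃ c y : Chord, K = s(c, y) ∧
    (critOrbit c ∩ Iarc y = ∅ ∨ critOrbit y ∩ Iarc c = ∅)

/-- A strong critical portrait. -/
def IsStrong (K : Portrait) : Prop := IsPortrait K ∧ ¬ IsWeak K

/-- Distance between (critical) portraits, metrizing convergence of the
unordered pairs of chords. -/
def portraitDist : Portrait → Portrait → ℝ :=
  Sym2.lift₂ ⟨fun a b c d =>
      min (max (chordDist a c) (chordDist b d)) (max (chordDist a d) (chordDist b c)), by
    intro a₁ a₂ b₁ b₂
    constructor
    · dsimp only
      rw [min_comm, max_comm (chordDist a₁ b₂), max_comm (chordDist a₁ b₁)]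
    · dsimp only
      rw [min_comm]⟩

/-- Convergence `K_i → K` in `CrP`. -/
def PortraitTendsto (f : ℕ → Portrait) (K : Portrait) : Prop :=
  Tendsto (fun n => portraitDist (f n) K) atTop (nhds 0)

/-- A critical portrait is compatible with a lamination if none of its chords
crosses a leaf. -/
def Compat (K : Portrait) (Λ : Lamination) : Prop :=
  ∀ c ∈ K, ∀ ℓ ∈ Λ.leaves, ¬ Cross c ℓ

/-- `C(Λ)`: the set of critical portraits compatible with `Λ`. -/
def CC (Λ : Lamination) : Set Portrait := {K | K ∈ CrP ∧ Compat K Λ}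

/-- Friendship of critical portraits: both compatible with a common nonempty
limit lamination. -/
def Friends (K₁ K₂ : Portrait) : Prop :=
  ∃ Λ : Lamination, IsLimitLam Λ ∧ Λ.NonemptyLam ∧ K₁ ∈ CC Λ ∧ K₂ ∈ CC Λ

/-- A prime critical portrait: some friend of it has a weak friend. -/
def IsPrime (K : Portrait) : Prop :=
  ∃ K' K'' : Portrait, Friends K K' ∧ Friends K' K'' ∧ IsWeak K''

/-- A regular chief: a chief all of whose critical portraits have only strong
friends. -/
def RegularChief (Λ : Lamination) : Prop :=
  IsChief Λ ∧ ∀ K ∈ CC Λ, ∀ K' : Portrait, Friends K K' → IsStrong K'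

/-- A regular lamination: one having a regular chief. -/
def RegularLam (Λ : Lamination) : Prop :=
  ∃ Λc : Lamination, IsChiefOf 3 Λc Λ ∧ RegularChief Λc

/-- A regular critical portrait: one compatible with a regular chief. -/
def RegularPortrait (K : Portrait) : Prop :=
  ∃ Λ : Lamination, RegularChief Λ ∧ K ∈ CC Λ

/-- Rotation of a circle point by angle `2πt`. -/
def rotPt (t : ℝ) (a : SPt) : SPt :=
  ⟨Complex.exp ((t * (2 * Real.pi) : ℝ) * Complex.I) * (a : ℂ), by
    rw [norm_mul, a.2, mul_one, Complex.norm_exp_ofReal_mul_I]⟩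

/-- Circular betweenness: `b` lies on the (closed) counterclockwise arc from
`a` to `c` (and `a`, `b`, `c` occur in this counterclockwise order). -/
def CBtw (a b c : SPt) : Prop :=
  ∃ s t : ℝ, 0 ≤ s ∧ s ≤ t ∧ t < 1 ∧ b = rotPt s a ∧ c = rotPt t a

/-- An invariant gap: a gap `G` of some sibling `σ_3`-invariant lamination
with `σ_3(G) = G`. -/
def IsInvGap (G : Set ℂ) : Prop :=
  ∃ Λ : Lamination, Λ.Invariant 3 ∧ IsGap Λ G ∧ gapImage 3 G = G

/-- An infinite gap (meets the circle in infinitely many points). -/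
def InfiniteGapSet (G : Set ℂ) : Prop := (G ∩ circleSet).Infinite

/-- Two circle points lie in the closure of a common complementary arc of
`G ∩ S` (or coincide): the fibers of the edge-collapsing map of `∂G`. -/
def complArcFiber (G : Set ℂ) (z w : SPt) : Prop :=
  z = w ∨ ∃ x : SPt, (x : ℂ) ∉ G ∧
    z ∈ closure (connectedComponentIn {y : SPt | (y : ℂ) ∉ G} x) ∧
    w ∈ closure (connectedComponentIn {y : SPt | (y : ℂ) ∉ G} x)

/-- A quadratic invariant gap: an infinite invariant gap of degree 2, i.e.
after collapsing the complementary arcs (edges) of its boundary, `σ_3` induces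
a two-to-one covering map of the circle. -/
def QuadGap (G : Set ℂ) : Prop :=
  IsInvGap G ∧ InfiniteGapSet G ∧
    ∃ φ : SPt → SPt, Continuous φ ∧ Function.Surjective φ ∧
      (∀ z w : SPt, φ z = φ w ↔ complArcFiber G z w) ∧
      ∃ g : SPt → SPt, IsCoveringMap g ∧ (∀ w : SPt, Nat.card (g ⁻¹' {w}) = 2) ∧
        ∀ z : SPt, (z : ℂ) ∈ G → φ (sigmaS 3 z) = g (φ z)

/-- A critical portrait is compatible with a gap if none of its chords crosses
an edge of the gap. -/
def CompatGap (K : Portrait) (G : Set ℂ) : Prop :=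
  ∀ c ∈ K, ∀ ℓ : Chord, IsEdge G ℓ → ¬ Cross c ℓ

/-- A set of portraits closed in `CrP`. -/
def ClosedPortraitSet (A : Set Portrait) : Prop :=
  ∀ f : ℕ → Portrait, (∀ n, f n ∈ A) → ∀ K ∈ CrP, PortraitTendsto f K → K ∈ A

/-- A finite rotational lap: a finite lap on which `σ_3` acts as a
combinatorial rotation of the vertices. -/
def RotationalLap (Λ : Lamination) (G : Set ℂ) : Prop :=
  IsLap Λ G ∧ (G ∩ circleSet).Finite ∧ gapImage 3 G = G ∧
    (∀ z : SPt, (z : ℂ) ∈ G → ((sigmaS 3 z : SPt) : ℂ) ∈ G) ∧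
    ∀ a b c : SPt, (a : ℂ) ∈ G → (b : ℂ) ∈ G → (c : ℂ) ∈ G →
      CBtw a b c → CBtw (sigmaS 3 a) (sigmaS 3 b) (sigmaS 3 c)


/-!
If every leaf were shorter than `1/(d+1)`, then `σ_d` would at least double the length of
every leaf: a chord of length `t < 1/(d+1)` is mapped to one of length
`min (d t) (1 - d t) ≥ min (2 t) (1/(d+1))`, and the image is again a short leaf, so of length
`≥ 2 t`. Iterating on a nondegenerate leaf gives leaves of length `≥ 2ⁿ t`, which is absurd.
-/

open Complex Real

theorem min_abs_le_abs_arg_exp_mul_I {x : ℝ} (hx : |x| < 2 * π) :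
    min |x| (2 * π - |x|) ≤ |arg (exp (x * I))| := by
  rw [arg_exp_mul_I]
  have hπ := Real.pi_pos
  rcases abs_lt.mp hx with ⟨hlo, hhi⟩
  by_cases hle : x ≤ π
  · by_cases hgt : -π < x
    · rw [(toIocMod_eq_self _).mpr ⟨hgt, by linarith⟩]
      exact min_le_left _ _
    · rw [not_lt] at hgt
      have : toIocMod two_pi_pos (-π) x = x + 2 * π :=
        (toIocMod_eq_iff _).mpr ⟨⟨by linarith, by linarith⟩, -1, by simp⟩
      rw [this, abs_of_nonneg (a := x + 2 * π) (by linarith), abs_of_neg (a := x) (by linarith)]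
      exact min_le_of_right_le (by linarith)
  · have : toIocMod two_pi_pos (-π) x = x - 2 * π :=
      (toIocMod_eq_iff _).mpr ⟨⟨by linarith, by linarith⟩, 1, by simp⟩
    rw [this, abs_of_neg (a := x - 2 * π) (by linarith), abs_of_pos (a := x) (by linarith)]
    exact min_le_of_right_le (by linarith)

theorem min_le_abs_arg_pow {w : ℂ} (hw : ‖w‖ = 1) (d : ℕ) (h : d * |arg w| < 2 * π) :
    min (d * |arg w|) (2 * π - d * |arg w|) ≤ |arg (w ^ d)| := by
  have hpow : w ^ d = exp (↑(d * arg w) * I) := by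
    conv_lhs => rw [← norm_mul_exp_arg_mul_I w, hw]
    rw [ofReal_one, one_mul, ← Complex.exp_nat_mul]
    push_cast; ring_nf
  have habs : |(d : ℝ) * arg w| = d * |arg w| := by
    rw [abs_mul, Nat.abs_cast]
  rw [hpow, ← habs]
  exact min_abs_le_abs_arg_exp_mul_I (habs ▸ h)

theorem norm_div_eq_one (a b : SPt) : ‖(a : ℂ) / b‖ = 1 := by
  rw [norm_div, a.2, b.2, div_one]

theorem chordLength_mk (a b : SPt) :
    chordLength s(a, b) = |arg ((a : ℂ) / b)| / (2 * π) := rfl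

theorem chordLength_nonneg (ℓ : Chord) : 0 ≤ chordLength ℓ := by
  induction ℓ using Sym2.ind with
  | _ a b => rw [chordLength_mk]; positivity

theorem chordLength_pos {ℓ : Chord} (h : ¬ ℓ.IsDiag) : 0 < chordLength ℓ := by
  induction ℓ using Sym2.ind with
  | _ a b =>
    rw [Sym2.mk_isDiag_iff] at h
    have harg : arg ((a : ℂ) / b) ≠ 0 := by
      intro h0
      have hone : (a : ℂ) / b = 1 :=
        ext_norm_arg (by rw [norm_div_eq_one, norm_one]) (by rw [h0, arg_one])
      rw [div_eq_one_iff_eq (norm_ne_zero_iff.mp (by rw [b.2]; exact one_ne_zero))] at hone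
      exact h (Subtype.ext hone)
    rw [chordLength_mk]
    positivity

theorem min_le_chordLength_chordMap (d : ℕ) (ℓ : Chord) (h : d * chordLength ℓ < 1) :
    min (d * chordLength ℓ) (1 - d * chordLength ℓ) ≤ chordLength (chordMap d ℓ) := by
  induction ℓ using Sym2.ind with
  | _ a b =>
    have hratio : ((sigmaS d a : ℂ) / (sigmaS d b : ℂ)) = ((a : ℂ) / b) ^ d := by
      simp [sigmaS, div_pow]
    have h2π : (0 : ℝ) < 2 * π := Real.two_pi_pos
    rw [chordMap, Sym2.map_mk, chordLength_mk (sigmaS d a), hratio, chordLength_mk]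
    rw [chordLength_mk, ← mul_div_assoc, div_lt_one h2π] at h
    have key := min_le_abs_arg_pow (norm_div_eq_one a b) d h
    rw [← mul_div_assoc, le_div_iff₀ h2π]
    calc min (d * |arg ((a : ℂ) / b)| / (2 * π)) (1 - d * |arg ((a : ℂ) / b)| / (2 * π)) * (2 * π)
        = min (d * |arg ((a : ℂ) / b)|) (2 * π - d * |arg ((a : ℂ) / b)|) := by
          rw [min_mul_of_nonneg _ _ h2π.le]; congr 1 <;> field_simp
      _ ≤ _ := key

theorem two_mul_chordLength_le_chordLength_chordMap {d : ℕ} (hd : 2 ≤ d) {ℓ : Chord}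
    (hℓ : chordLength ℓ < 1 / (d + 1)) (hσℓ : chordLength (chordMap d ℓ) < 1 / (d + 1)) :
    2 * chordLength ℓ ≤ chordLength (chordMap d ℓ) := by
  have hd' : (2 : ℝ) ≤ d := by exact_mod_cast hd
  have hL := chordLength_nonneg ℓ
  have hlt : chordLength ℓ * (d + 1) < 1 := (lt_div_iff₀ (by positivity)).mp hℓ
  have hfar : 1 / ((d : ℝ) + 1) < 1 - d * chordLength ℓ := by
    rw [div_lt_iff₀ (by positivity)]; nlinarith
  rcases min_le_iff.mp (min_le_chordLength_chordMap d ℓ (by nlinarith)) with hnear | hwrap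
  · nlinarith
  · linarith

theorem nonpos_of_two_mul_le_apply {α : Type*} {f : α → α} {g : α → ℝ} {s : Set α} {C : ℝ}
    (hf : Set.MapsTo f s s) (hC : ∀ x ∈ s, g x ≤ C) (hg : ∀ x ∈ s, 2 * g x ≤ g (f x))
    {x : α} (hx : x ∈ s) : g x ≤ 0 := by
  have hiter : ∀ n : ℕ, 2 ^ n * g x ≤ g (f^[n] x) := by
    intro n
    induction n with
    | zero => simp
    | succ n ih =>
      rw [Function.iterate_succ_apply', pow_succ']
      calc 2 * 2 ^ n * g x ≤ 2 * g (f^[n] x) := by rw [mul_assoc]; linarith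
        _ ≤ _ := hg _ (hf.iterate n hx)
  by_contra! hpos
  obtain ⟨n, hn⟩ := pow_unbounded_of_one_lt (C / g x) one_lt_two
  have := hC _ (hf.iterate n hx)
  rw [div_lt_iff₀ hpos] at hn
  linarith [hiter n]

/-- For every integer `d ≥ 2`, every nonempty sibling
`σ_d`-invariant lamination contains a leaf `ℓ` with `|ℓ| ≥ 1/(d+1)`. -/
theorem stmt0 (d : ℕ) (hd : 2 ≤ d) (Λ : Lamination) (hinv : Λ.Invariant d)
    (hne : Λ.NonemptyLam) :
    ∃ ℓ ∈ Λ.leaves, 1 / ((d : ℝ) + 1) ≤ chordLength ℓ := by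
  by_contra! hshort
  obtain ⟨ℓ₀, hℓ₀, hnd⟩ := hne
  have hforward : Set.MapsTo (chordMap d) Λ.leaves Λ.leaves := hinv.1
  have hdouble : ∀ ℓ ∈ Λ.leaves, 2 * chordLength ℓ ≤ chordLength (chordMap d ℓ) := fun ℓ hℓ =>
    two_mul_chordLength_le_chordLength_chordMap hd (hshort ℓ hℓ) (hshort _ (hforward hℓ))
  have hnonpos := nonpos_of_two_mul_le_apply hforward (fun ℓ hℓ => (hshort ℓ hℓ).le) hdouble hℓ₀
  exact (chordLength_pos hnd).not_ge hnonpos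
end
end

section
/- For every integer d ≥ 2, every nonempty sibling σ_d-invariant lamination contains a chief: a nonempty sibling σ_d-invariant sublamination that has no properly smaller nonempty sibling σ_d-invariant sublamination. -/
noncomputable section

open Filter Metric

/-!
Zorn's lemma, applied downwards to the nonempty sibling `σ_d`-invariant sublaminations of `Λ`,
produces a chief as soon as the intersection of every chain of them is again one of them.
The intersection is a lamination because leaf sets are closed: if a limit of leaves were not a
leaf, the leaf through its midpoint would be crossed by nearby leaves. It is sibling invariant
because the preimages and the sibling families of a leaf range over finite sets, and a chain of
nonempty finite sets has nonempty intersection. It has a nondegenerate leaf because `σ_d`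
multiplies small angles by `d`, so every forward-invariant family with a nondegenerate leaf has a
leaf subtending an angle at least `π / d`; along the chain these leaves form decreasing nonempty
compact sets.
-/

open Set

def lineSide (a b z : ℂ) : ℝ := (b - a).re * (z - a).im - (b - a).im * (z - a).re

lemma lineSide_add_smul_sub (a b c e : ℂ) (t : ℝ) :
    lineSide a b (c + t • (e - c)) = lineSide a b c + t * (lineSide a b e - lineSide a b c) := by
  simp only [lineSide, Complex.real_smul, Complex.add_re, Complex.add_im, Complex.mul_re,
    Complex.mul_im, Complex.sub_re, Complex.sub_im, Complex.ofReal_re, Complex.ofReal_im]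
  ring

lemma lineSide_add_smul_sub_self (a b : ℂ) (t : ℝ) : lineSide a b (a + t • (b - a)) = 0 := by
  simp only [lineSide, Complex.real_smul, Complex.add_re, Complex.add_im, Complex.mul_re,
    Complex.mul_im, Complex.sub_re, Complex.sub_im, Complex.ofReal_re, Complex.ofReal_im]
  ring

lemma exists_eq_add_smul_of_lineSide_eq_zero {a b z : ℂ} (hab : a ≠ b)
    (h : lineSide a b z = 0) : ∃ s : ℝ, z = a + s • (b - a) := by
  have hB : (b.re - a.re) ^ 2 + (b.im - a.im) ^ 2 ≠ 0 := by
    have : Complex.normSq (b - a) ≠ 0 := by simpa [sub_eq_zero] using hab.symm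
    simpa [Complex.normSq_apply, sq] using this
  refine ⟨((b.re - a.re) * (z.re - a.re) + (b.im - a.im) * (z.im - a.im)) /
    ((b.re - a.re) ^ 2 + (b.im - a.im) ^ 2), ?_⟩
  simp only [lineSide, Complex.sub_re, Complex.sub_im] at h
  apply Complex.ext <;>
    simp only [Complex.real_smul, Complex.add_re, Complex.add_im, Complex.mul_re,
      Complex.mul_im, Complex.ofReal_re, Complex.ofReal_im, Complex.sub_re, Complex.sub_im] <;>
    field_simp
  · linear_combination (-(b.im - a.im)) * h
  · linear_combination (b.re - a.re) * h

lemma sq_norm_add_smul_sub {a b : ℂ} (ha : ‖a‖ = 1) (hb : ‖b‖ = 1) (s : ℝ) :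
    ‖a + s • (b - a)‖ ^ 2 = 1 + ‖b - a‖ ^ 2 * (s ^ 2 - s) := by
  rw [Complex.sq_norm, Complex.sq_norm]
  have ha' : Complex.normSq a = 1 := by rw [Complex.normSq_eq_norm_sq, ha, one_pow]
  have hb' : Complex.normSq b = 1 := by rw [Complex.normSq_eq_norm_sq, hb, one_pow]
  simp only [Complex.normSq_apply, Complex.real_smul, Complex.add_re, Complex.add_im,
    Complex.mul_re, Complex.mul_im, Complex.sub_re, Complex.sub_im, Complex.ofReal_re,
    Complex.ofReal_im] at ha' hb' ⊢
  linear_combination (1 - s) * ha' + s * hb'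

lemma norm_add_smul_sub_lt_one {a b : ℂ} (ha : ‖a‖ = 1) (hb : ‖b‖ = 1) (hab : a ≠ b) {t : ℝ}
    (ht₀ : 0 < t) (ht₁ : t < 1) : ‖a + t • (b - a)‖ < 1 := by
  have hba : 0 < ‖b - a‖ := norm_pos_iff.2 (sub_ne_zero.2 hab.symm)
  rw [← sq_lt_one_iff₀ (norm_nonneg _), sq_norm_add_smul_sub ha hb]
  nlinarith [mul_pos (pow_pos hba 2) (mul_pos ht₀ (sub_pos.2 ht₁))]

lemma mem_segment_of_lineSide_eq_zero {a b z : ℂ} (ha : ‖a‖ = 1) (hb : ‖b‖ = 1) (hab : a ≠ b)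
    (h : lineSide a b z = 0) (hz : ‖z‖ < 1) : z ∈ segment ℝ a b := by
  obtain ⟨s, rfl⟩ := exists_eq_add_smul_of_lineSide_eq_zero hab h
  have hba : 0 < ‖b - a‖ := norm_pos_iff.2 (sub_ne_zero.2 hab.symm)
  rw [← sq_lt_one_iff₀ (norm_nonneg _), sq_norm_add_smul_sub ha hb] at hz
  have hs : s * (1 - s) > 0 := by nlinarith [sq_nonneg ‖b - a‖]
  rw [segment_eq_image']
  exact ⟨s, ⟨by nlinarith, by nlinarith⟩, rfl⟩

lemma eq_or_eq_of_lineSide_eq_zero {a b c : ℂ} (ha : ‖a‖ = 1) (hb : ‖b‖ = 1) (hab : a ≠ b)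
    (hc : ‖c‖ = 1) (h : lineSide a b c = 0) : c = a ∨ c = b := by
  obtain ⟨s, rfl⟩ := exists_eq_add_smul_of_lineSide_eq_zero hab h
  have hba : 0 < ‖b - a‖ := norm_pos_iff.2 (sub_ne_zero.2 hab.symm)
  have hs := sq_norm_add_smul_sub ha hb s
  rw [hc, one_pow, left_eq_add, mul_eq_zero] at hs
  rcases hs with hs | hs
  · exact absurd hs (by positivity)
  rcases mul_eq_zero.1 (show s * (s - 1) = 0 by linarith) with rfl | hs
  · simp
  · simp [sub_eq_zero.1 hs]

lemma cross_of_lineSide_neg_pos {u v c e : SPt} (hc : lineSide u v c < 0)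
    (he : 0 < lineSide u v e) : Cross s(u, v) s(c, e) := by
  have huv : (u : ℂ) ≠ v := fun h => by simp [lineSide, h] at hc
  have hce : (c : ℂ) ≠ e := fun h => by rw [h] at hc; linarith
  set t := lineSide u v c / (lineSide u v c - lineSide u v e)
  have ht₀ : 0 < t := div_pos_of_neg_of_neg hc (by linarith)
  have ht₁ : t < 1 := (div_lt_one_of_neg (by linarith)).2 (by linarith)
  set q := (c : ℂ) + t • ((e : ℂ) - c)
  have hq_line : lineSide u v q = 0 := by
    rw [lineSide_add_smul_sub]
    simp only [t]
    field_simp [show lineSide u v c - lineSide u v e ≠ 0 by linarith]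
    ring
  have hq : ‖q‖ < 1 := norm_add_smul_sub_lt_one c.2 e.2 hce ht₀ ht₁
  have hne : s(u, v) ≠ s(c, e) := by
    intro h
    have hcuv : c = u ∨ c = v := by simpa using (h ▸ Sym2.mem_mk_left c e : c ∈ s(u, v))
    rcases hcuv with rfl | rfl
    · simp [lineSide] at hc
    · have : lineSide (u : ℂ) c c = 0 := by simp only [lineSide]; ring
      linarith
  refine ⟨hne, q, ⟨mem_segment_of_lineSide_eq_zero u.2 v.2 huv hq_line hq, ?_⟩, ?_⟩
  · show q ∈ segment ℝ (c : ℂ) e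
    rw [segment_eq_image']
    exact ⟨t, ⟨ht₀.le, ht₁.le⟩, rfl⟩
  · simpa [openDisk] using hq

instance : CompactSpace SPt :=
  (isCompact_iff_compactSpace (s := circleSet)).mp <| by
    simpa [circleSet, Metric.sphere] using isCompact_sphere (0 : ℂ) 1

lemma chordSet_mk (a b : SPt) : chordSet s(a, b) = segment ℝ (a : ℂ) b := rfl

-- `Sym2 SPt` carries no topology, so closedness of a family of chords is stated for its
-- endpoint pairs.
def endpointPairs (L : Set Chord) : Set (SPt × SPt) := {q | s(q.1, q.2) ∈ L}

lemma isCompact_biUnion_chordSet {L : Set Chord} (hL : IsClosed (endpointPairs L)) :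
    IsCompact (⋃ ℓ ∈ L, chordSet ℓ) := by
  have : (⋃ ℓ ∈ L, chordSet ℓ) = (fun x : (SPt × SPt) × ℝ => (x.1.1 : ℂ) +
      x.2 • ((x.1.2 : ℂ) - x.1.1)) '' (endpointPairs L ×ˢ Icc 0 1) := by
    ext z
    simp [Sym2.exists, chordSet_mk, segment_eq_image', endpointPairs, and_assoc]
  rw [this]
  exact (hL.isCompact.prod isCompact_Icc).image (by fun_prop)

lemma continuous_lineSide (z : ℂ) : Continuous fun q : SPt × SPt => lineSide q.1 q.2 z := by
  unfold lineSide
  fun_prop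

namespace Lamination

lemma not_lineSide_neg_pos_of_mem_closure (Λ : Lamination) {a b c e : SPt}
    (hab : (a, b) ∈ closure (endpointPairs Λ.leaves)) (hce : s(c, e) ∈ Λ.leaves)
    (hc : lineSide a b c < 0) (he : 0 < lineSide a b e) : False := by
  have hU : IsOpen {q : SPt × SPt | lineSide q.1 q.2 c < 0 ∧ 0 < lineSide q.1 q.2 e} :=
    (isOpen_lt (continuous_lineSide c) continuous_const).inter
      (isOpen_lt continuous_const (continuous_lineSide e))
  obtain ⟨⟨u, v⟩, ⟨huc, hue⟩, huv⟩ := mem_closure_iff.1 hab _ hU ⟨hc, he⟩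
  exact Λ.no_cross _ huv _ hce (cross_of_lineSide_neg_pos huc hue)

lemma add_smul_sub_mem_of_mem_closure (Λ : Lamination) {a b : SPt}
    (hab : (a, b) ∈ closure (endpointPairs Λ.leaves)) {t : ℝ} (ht : t ∈ Icc 0 1) :
    (a : ℂ) + t • ((b : ℂ) - a) ∈ ⋃ ℓ ∈ Λ.leaves, chordSet ℓ := by
  have := map_mem_closure (t := ⋃ ℓ ∈ Λ.leaves, chordSet ℓ)
    (f := fun q : SPt × SPt => (q.1 : ℂ) + t • ((q.2 : ℂ) - q.1)) (by fun_prop) hab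
    fun q hq => mem_biUnion hq (by rw [chordSet_mk, segment_eq_image']; exact ⟨t, ht, rfl⟩)
  rwa [Λ.plus_compact.isClosed.closure_eq] at this

lemma isClosed_endpointPairs (Λ : Lamination) : IsClosed (endpointPairs Λ.leaves) := by
  rw [← closure_subset_iff_isClosed]
  rintro ⟨a, b⟩ hab
  by_cases h : a = b
  · subst h
    exact Λ.diag_mem a
  have hab' : (a : ℂ) ≠ b := fun h' => h (Subtype.ext h')
  obtain ⟨ℓ, hℓ, hpℓ⟩ := mem_iUnion₂.1 <|
    Λ.add_smul_sub_mem_of_mem_closure hab (t := 1 / 2) ⟨by norm_num, by norm_num⟩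
  induction ℓ using Sym2.ind with | _ c e =>
  rw [chordSet_mk, segment_eq_image'] at hpℓ
  obtain ⟨t, ⟨ht₀, ht₁⟩, hpt⟩ := hpℓ
  dsimp only at hpt
  have hp : ‖(c : ℂ) + t • ((e : ℂ) - c)‖ < 1 :=
    hpt ▸ norm_add_smul_sub_lt_one a.2 b.2 hab' (by norm_num) (by norm_num)
  have hside : lineSide a b c + t * (lineSide a b e - lineSide a b c) = 0 := by
    rw [← lineSide_add_smul_sub, hpt]
    exact lineSide_add_smul_sub_self _ _ _
  have ht₀' : 0 < t := ht₀.lt_of_ne fun h => by simp [← h, c.2] at hp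
  have ht₁' : t < 1 := ht₁.lt_of_ne fun h => by simp [h, e.2] at hp
  -- The leaf `ce` through the midpoint of `ab` has either both endpoints on the line `ab`, and
  -- then it is `ab`, or its endpoints strictly on opposite sides of that line.
  rcases lt_trichotomy (lineSide a b c) 0 with hc | hc | hc
  · exact (Λ.not_lineSide_neg_pos_of_mem_closure hab hℓ hc (by nlinarith)).elim
  · have he : lineSide a b e = 0 := by
      rw [hc] at hside
      exact (mul_eq_zero.1 (by linarith : t * lineSide a b e = 0)).resolve_left ht₀'.ne'
    have hce : c ≠ e := by
      rintro rfl
      simp [c.2] at hp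
    have hc' := eq_or_eq_of_lineSide_eq_zero a.2 b.2 hab' c.2 hc
    have he' := eq_or_eq_of_lineSide_eq_zero a.2 b.2 hab' e.2 he
    simp only [← Subtype.ext_iff] at hc' he'
    have : s(a, b) = s(c, e) := by
      rcases hc' with rfl | rfl <;> rcases he' with rfl | rfl
      exacts [absurd rfl hce, rfl, Sym2.eq_swap, absurd rfl hce]
    show s(a, b) ∈ Λ.leaves
    rwa [this]
  · refine (Λ.not_lineSide_neg_pos_of_mem_closure hab (Sym2.eq_swap ▸ hℓ)
      (by nlinarith) hc).elim

end Lamination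

theorem IsChain.nonempty_biInter_of_finite {α β : Type*} [Preorder α] {c : Set α}
    (hc : IsChain (· ≤ ·) c) (hne : c.Nonempty) {A : α → Set β} (hA : Monotone A)
    (hfin : ∀ x ∈ c, (A x).Finite) (hnon : ∀ x ∈ c, (A x).Nonempty) :
    (⋂ x ∈ c, A x).Nonempty := by
  obtain ⟨x₀, hx₀, hmin⟩ := exists_minimalFor_of_wellFoundedLT (· ∈ c) (fun x => (A x).ncard) hne
  obtain ⟨b, hb⟩ := hnon x₀ hx₀
  refine ⟨b, mem_iInter₂.2 fun x hx => ?_⟩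
  rcases hc.total hx hx₀ with h | h
  · have hfin₀ := hfin x₀ hx₀
    rwa [eq_of_subset_of_ncard_le (hA h) (hmin hx (ncard_le_ncard (hA h) hfin₀)) hfin₀]
  · exact hA h hb

lemma coe_sigmaS_iterate (d k : ℕ) (a : SPt) :
    (((sigmaS d)^[k] a : SPt) : ℂ) = (a : ℂ) ^ d ^ k := by
  induction k with
  | zero => simp
  | succ k ih => rw [Function.iterate_succ_apply', pow_succ, pow_mul, ← ih]; rfl

lemma finite_setOf_sigmaS_eq {d : ℕ} (hd : 0 < d) (y : SPt) :
    {x : SPt | sigmaS d x = y}.Finite :=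
  ((Polynomial.nthRoots d (y : ℂ)).toFinset.finite_toSet.preimage
    Subtype.val_injective.injOn).subset fun x (hx : sigmaS d x = y) => by
      simp [Polynomial.mem_nthRoots hd, ← hx, sigmaS]

lemma finite_setOf_chordMap_eq {d : ℕ} (hd : 0 < d) (ℓ : Chord) :
    {p : Chord | chordMap d p = ℓ}.Finite := by
  induction ℓ using Sym2.ind with | _ u v =>
  set A := {x | sigmaS d x = u} ∪ {x | sigmaS d x = v}
  have hA : A.Finite := (finite_setOf_sigmaS_eq hd u).union (finite_setOf_sigmaS_eq hd v)
  refine ((hA.prod hA).image fun q => s(q.1, q.2)).subset fun p hp => ?_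
  induction p using Sym2.ind with | _ x y =>
  rcases Sym2.eq_iff.1 hp with ⟨hx, hy⟩ | ⟨hx, hy⟩
  · exact ⟨(x, y), ⟨Or.inl hx, Or.inr hy⟩, rfl⟩
  · exact ⟨(x, y), ⟨Or.inr hx, Or.inl hy⟩, rfl⟩

open Real in
lemma exists_cos_pow_mul_le_cos_pi_div {d : ℕ} (hd : 2 ≤ d) {θ : ℝ} (h₀ : 0 < θ) (hπ : θ ≤ π) :
    ∃ k : ℕ, cos (d ^ k * θ) ≤ cos (π / d) := by
  classical
  have hd₁ : (1 : ℝ) < d := by exact_mod_cast hd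
  have hex : ∃ k : ℕ, π / d ≤ d ^ k * θ := by
    obtain ⟨k, hk⟩ := pow_unbounded_of_one_lt (π / d / θ) hd₁
    exact ⟨k, ((div_lt_iff₀ h₀).1 hk).le⟩
  refine ⟨Nat.find hex, cos_le_cos_of_nonneg_of_le_pi (by positivity) ?_ (Nat.find_spec hex)⟩
  obtain hk | ⟨j, hk⟩ : Nat.find hex = 0 ∨ ∃ j, Nat.find hex = j + 1 := by
    cases Nat.find hex <;> simp
  · simpa [hk] using hπ
  · have hj : d ^ j * θ < π / d := not_le.1 (Nat.find_min hex (by omega))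
    rw [hk, pow_succ, mul_right_comm]
    calc _ ≤ π / d * d := by gcongr
      _ = π := div_mul_cancel₀ _ (by positivity)

open Real in
lemma exists_re_pow_pow_le_cos_pi_div {d : ℕ} (hd : 2 ≤ d) {w : ℂ} (hw : ‖w‖ = 1)
    (hw₁ : w ≠ 1) : ∃ k : ℕ, (w ^ d ^ k).re ≤ cos (π / d) := by
  have hexp : w = Complex.exp (w.arg * Complex.I) := by
    simpa [hw] using (Complex.norm_mul_exp_arg_mul_I w).symm
  have harg : w.arg ≠ 0 := fun h => hw₁ (by rw [hexp, h]; simp)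
  obtain ⟨k, hk⟩ := exists_cos_pow_mul_le_cos_pi_div hd (abs_pos.2 harg) (Complex.abs_arg_le_pi w)
  refine ⟨k, ?_⟩
  rw [hexp, ← Complex.exp_nat_mul, ← mul_assoc]
  have : ((d ^ k : ℕ) : ℂ) * w.arg = ((d ^ k * w.arg : ℝ) : ℂ) := by push_cast; ring
  rw [this, Complex.exp_ofReal_mul_I_re, ← cos_abs, abs_mul, abs_of_nonneg (by positivity)]
  exact hk

-- `Re (x / y) ≤ cos (π / d)` says that the chord `xy` subtends an angle at least `π / d`.
lemma exists_long_leaf {d : ℕ} (hd : 2 ≤ d) {L : Set Chord} (hL : MapsTo (chordMap d) L L)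
    {a b : SPt} (hab : a ≠ b) (h : s(a, b) ∈ L) :
    ∃ q ∈ endpointPairs L, ((q.1 : ℂ) / q.2).re ≤ Real.cos (Real.pi / d) := by
  have hb : (b : ℂ) ≠ 0 := by simp [← norm_ne_zero_iff, b.2]
  obtain ⟨k, hk⟩ := exists_re_pow_pow_le_cos_pi_div hd (w := a / b) (by simp [a.2, b.2])
    (by rwa [Ne, div_eq_one_iff_eq hb, ← Subtype.ext_iff])
  have hmem : ∀ n, s((sigmaS d)^[n] a, (sigmaS d)^[n] b) ∈ L := by
    intro n
    induction n with
    | zero => exact h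
    | succ n ih =>
      simpa only [Function.iterate_succ_apply', chordMap, Sym2.map_mk] using hL ih
  exact ⟨((sigmaS d)^[k] a, (sigmaS d)^[k] b), hmem k,
    by simpa [coe_sigmaS_iterate, div_pow] using hk⟩

namespace Lamination

lemma leaves_injective : Function.Injective leaves := by
  rintro ⟨L₁, _, _, _⟩ ⟨L₂, _, _, _⟩ rfl
  rfl

instance : PartialOrder Lamination := PartialOrder.lift leaves leaves_injective

def sInf (c : Set Lamination) (hc : c.Nonempty) : Lamination where
  leaves := ⋂ Λ ∈ c, Λ.leaves
  no_cross ℓ₁ h₁ ℓ₂ h₂ :=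
    hc.some.no_cross ℓ₁ (mem_iInter₂.1 h₁ _ hc.some_mem) ℓ₂ (mem_iInter₂.1 h₂ _ hc.some_mem)
  diag_mem z := mem_iInter₂.2 fun Λ _ => Λ.diag_mem z
  plus_compact := isCompact_biUnion_chordSet <| by
    simpa only [endpointPairs, mem_iInter₂, ofPred_forall] using
      isClosed_biInter fun Λ (_ : Λ ∈ c) => Λ.isClosed_endpointPairs

variable {d : ℕ} {c : Set Lamination}

lemma sInf_le (hc : c.Nonempty) {Λ : Lamination} (hΛ : Λ ∈ c) : sInf c hc ≤ Λ :=
  biInter_subset_of_mem hΛ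

theorem invariant_sInf (hd : 0 < d) (hc : IsChain (· ≤ ·) c) (hne : c.Nonempty)
    (h : ∀ Λ ∈ c, Λ.Invariant d) : (sInf c hne).Invariant d := by
  have mem_sInf {ℓ : Chord} : ℓ ∈ (sInf c hne).leaves ↔ ∀ Λ ∈ c, ℓ ∈ Λ.leaves := mem_iInter₂
  refine ⟨fun ℓ hℓ => mem_sInf.2 fun Λ hΛ => (h Λ hΛ).1 ℓ (mem_sInf.1 hℓ Λ hΛ), ?_, ?_⟩
  · intro ℓ hℓ
    obtain ⟨p, hp⟩ := hc.nonempty_biInter_of_finite hne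
      (A := fun Λ => {p ∈ Λ.leaves | chordMap d p = ℓ}) (fun _ _ h _ hp => ⟨h hp.1, hp.2⟩)
      (fun _ _ => (finite_setOf_chordMap_eq hd ℓ).subset fun _ hp => hp.2)
      (fun Λ hΛ => (h Λ hΛ).2.1 ℓ (mem_sInf.1 hℓ Λ hΛ))
    rw [mem_iInter₂] at hp
    exact ⟨p, mem_sInf.2 fun Λ hΛ => (hp Λ hΛ).1, (hp _ hne.some_mem).2⟩
  · intro ℓ hℓ hnd
    obtain ⟨s, hs⟩ := hc.nonempty_biInter_of_finite hne
      (A := fun Λ => {s : Fin d → Chord | (∃ i, s i = ℓ) ∧ (∀ i, s i ∈ Λ.leaves) ∧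
        Function.Injective s ∧ (∀ i j, i ≠ j → chordSet (s i) ∩ chordSet (s j) = ∅) ∧
        ∀ i, chordMap d (s i) = chordMap d ℓ})
      (fun _ _ h _ hs => ⟨hs.1, fun i => h (hs.2.1 i), hs.2.2⟩)
      (fun _ _ => ((Finite.pi fun _ => finite_setOf_chordMap_eq hd (chordMap d ℓ))).subset
        fun _ hs => mem_univ_pi.2 hs.2.2.2.2)
      (fun Λ hΛ => (h Λ hΛ).2.2 ℓ (mem_sInf.1 hℓ Λ hΛ) hnd)
    rw [mem_iInter₂] at hs
    obtain ⟨hℓs, -, hinj, hdisj, himg⟩ := hs _ hne.some_mem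
    exact ⟨s, hℓs, fun i => mem_sInf.2 fun Λ hΛ => (hs Λ hΛ).2.1 i, hinj, hdisj, himg⟩

theorem nonemptyLam_sInf (hd : 2 ≤ d) (hc : IsChain (· ≤ ·) c) (hne : c.Nonempty)
    (hfwd : ∀ Λ ∈ c, MapsTo (chordMap d) Λ.leaves Λ.leaves)
    (h : ∀ Λ ∈ c, Λ.NonemptyLam) : (sInf c hne).NonemptyLam := by
  set K : Lamination → Set (SPt × SPt) := fun Λ =>
    endpointPairs Λ.leaves ∩ {q | ((q.1 : ℂ) / q.2).re ≤ Real.cos (Real.pi / d)}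
  have hK : ∀ Λ, IsClosed (K Λ) := fun Λ =>
    Λ.isClosed_endpointPairs.inter <| isClosed_le
      (by fun_prop (disch := intro q; simp [← norm_ne_zero_iff, q.2.2])) continuous_const
  have hK_mono : Monotone K := fun _ _ hle => inter_subset_inter_left _ fun _ hq => hle hq
  have hdir : Directed (· ⊇ ·) fun Λ : c => K Λ := fun Λ₁ Λ₂ =>
    (hc.total Λ₁.2 Λ₂.2).elim (fun hle => ⟨Λ₁, subset_rfl, hK_mono hle⟩)
      fun hle => ⟨Λ₂, hK_mono hle, subset_rfl⟩
  have : Nonempty c := hne.to_subtype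
  obtain ⟨q, hq⟩ := IsCompact.nonempty_iInter_of_directed_nonempty_isCompact_isClosed _ hdir
    (fun ⟨Λ, hΛ⟩ => by
      obtain ⟨ℓ, hℓ, hnd⟩ := h Λ hΛ
      induction ℓ using Sym2.ind with | _ a b =>
      exact exists_long_leaf hd (hfwd Λ hΛ) (fun hab => hnd (Sym2.mk_isDiag_iff.2 hab)) hℓ)
    (fun Λ => (hK Λ).isCompact) (fun Λ => hK Λ)
  simp only [mem_iInter, Subtype.forall] at hq
  refine ⟨s(q.1, q.2), mem_iInter₂.2 fun Λ hΛ => (hq Λ hΛ).1, fun hdiag => ?_⟩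
  have hcos : Real.cos (Real.pi / d) < 1 := by
    simpa using Real.cos_lt_cos_of_nonneg_of_le_pi le_rfl
      (div_le_self Real.pi_pos.le (by exact_mod_cast (by omega : 1 ≤ d))) (by positivity)
  have hlong : ((q.1 : ℂ) / q.2).re ≤ _ := (hq _ hne.some_mem).2
  rw [Sym2.mk_isDiag_iff.1 hdiag, div_self (by simp [← norm_ne_zero_iff, q.2.2]),
    Complex.one_re] at hlong
  exact hlong.not_gt hcos

end Lamination

/-- every nonempty sibling `σ_d`-invariant lamination contains a
chief, i.e. a minimal-by-inclusion nonempty sibling `σ_d`-invariant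
sublamination. -/
theorem stmt2 (d : ℕ) (hd : 2 ≤ d) (Λ : Lamination) (hinv : Λ.Invariant d)
    (hne : Λ.NonemptyLam) :
    ∃ Λc : Lamination, IsChiefOf d Λc Λ := by
  set S := {Λ' : Lamination | Λ'.Invariant d ∧ Λ'.NonemptyLam}
  have hchain (c : Set Lamination) (hcS : c ⊆ S) (hc : IsChain (· ≤ ·) c) (hne : c.Nonempty) :
      ∃ lb ∈ S, ∀ Λ' ∈ c, lb ≤ Λ' :=
    ⟨Lamination.sInf c hne,
      ⟨Lamination.invariant_sInf (by omega) hc hne fun Λ' hΛ' => (hcS hΛ').1,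
        Lamination.nonemptyLam_sInf hd hc hne (fun Λ' hΛ' => (hcS hΛ').1.1)
          fun Λ' hΛ' => (hcS hΛ').2⟩,
      fun _ => Lamination.sInf_le hne⟩
  obtain ⟨Λc, hle, hmin⟩ := @zorn_le_nonempty₀ Laminationᵒᵈ _ S
    (fun c hcS hc Λ₀ hΛ₀ => hchain c hcS hc.symm ⟨Λ₀, hΛ₀⟩) Λ ⟨hinv, hne⟩
  exact ⟨Λc, hle, hmin.1.1, hmin.1.2, fun Λ' hsub hinv' hne' =>
    le_antisymm hsub (hmin.2 ⟨hinv', hne'⟩ hsub)⟩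
end
end

section
/- The set of strong cubic critical portraits is open and dense in the space CrP of all cubic critical portraits, and the set of weak cubic critical portraits is closed and nowhere dense in CrP. -/
noncomputable section

open Filter Metric

/-!
Every critical chord is `critChord t = s(e(t), e(t + 1/3))` with `e(t) = exp (2πit)`. If `m` is the
sum of the endpoints of a critical chord (a unit vector), its segment is
`{p | ⟪p, m⟫ = 1/2, ‖p‖ ≤ 1}` and its short arc is `I = {z | ⟪z, m⟫ > 1/2}`.

A portrait `{c, y}` is strong iff some `σ₃ⁿ`-image of `c` lies in `I(y)` and vice versa. Such a
strict inequality survives small moves of the endpoints, and Hausdorff-close critical chords have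
close endpoints: strong portraits form an open set.

For density, take `R = 3ᴺ` large and move the angles `θ, φ` of the two chords by at most
`1/(R - 1)` so that `Rθ ≡ φ + 1/6` and `Rφ ≡ θ + 1/6 (mod 1)`. Then `σ₃ᴺ` maps each chord to the
midpoint of the short arc of the other; after pushing `φ - θ` slightly into `(1/3, 2/3)` the
chords still do not cross. Weak portraits are the complement of strong ones in `CrP`, hence closed
and with empty interior.
-/

namespace CubicPortrait

open Real
open scoped RealInnerProductSpace

section Segment

variable {E : Type*} [NormedAddCommGroup E] [NormedSpace ℝ E]

lemma exists_mem_segment_dist_le {x y x' y' z : E} (hz : z ∈ segment ℝ x y) :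
    ∃ z' ∈ segment ℝ x' y', dist z z' ≤ max (dist x x') (dist y y') := by
  obtain ⟨s, t, hs, ht, hst, rfl⟩ := hz
  refine ⟨s • x' + t • y', ⟨s, t, hs, ht, hst, rfl⟩, ?_⟩
  calc dist (s • x + t • y) (s • x' + t • y') ≤ s * dist x x' + t * dist y y' := by
        refine (dist_add_add_le _ _ _ _).trans_eq ?_
        rw [dist_smul₀, dist_smul₀, Real.norm_of_nonneg hs, Real.norm_of_nonneg ht]
    _ ≤ s * max (dist x x') (dist y y') + t * max (dist x x') (dist y y') := by
        gcongr
        exacts [le_max_left _ _, le_max_right _ _]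
    _ = max (dist x x') (dist y y') := by rw [← add_mul, hst, one_mul]

lemma hausdorffDist_segment_le (x y x' y' : E) :
    hausdorffDist (segment ℝ x y) (segment ℝ x' y') ≤ max (dist x x') (dist y y') := by
  refine hausdorffDist_le_of_mem_dist (le_max_of_le_left dist_nonneg)
    (fun z hz => exists_mem_segment_dist_le hz) (fun z hz => ?_)
  obtain ⟨z', hz', hd⟩ := exists_mem_segment_dist_le (x' := x) (y' := y) hz
  exact ⟨z', hz', by rwa [dist_comm x', dist_comm y'] at hd⟩

lemma hausdorffEDist_segment_ne_top (x y x' y' : E) :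
    hausdorffEDist (segment ℝ x y) (segment ℝ x' y') ≠ ⊤ := by
  have hb : ∀ x y : E, Bornology.IsBounded (segment ℝ x y) := fun x y => by
    rw [← convexHull_pair (𝕜 := ℝ)]; exact ((Set.toFinite _).isCompact_convexHull ℝ).isBounded
  exact hausdorffEDist_ne_top_of_nonempty_of_bounded ⟨x, left_mem_segment ℝ x y⟩
    ⟨x', left_mem_segment ℝ x' y'⟩ (hb x y) (hb x' y')

end Segment

lemma cos_two_pi_div_three : cos (2 * π / 3) = -1 / 2 := by
  rw [show 2 * π / 3 = π - π / 3 by ring, cos_pi_sub, cos_pi_div_three]; norm_num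

lemma cos_two_pi_mul_lt_half {x : ℝ} (h₁ : 1 / 6 < x) (h₂ : x < 5 / 6) :
    cos (2 * π * x) < 1 / 2 := by
  have := pi_pos
  rw [← cos_pi_div_three]
  rcases le_or_gt x (1 / 2) with hx | hx
  · exact cos_lt_cos_of_nonneg_of_le_pi (by positivity) (by nlinarith) (by nlinarith)
  · rw [← cos_two_pi_sub]
    exact cos_lt_cos_of_nonneg_of_le_pi (by positivity) (by nlinarith) (by nlinarith)

lemma mem_Icc_of_cos_two_pi_mul_le {x : ℝ} (h₀ : 0 ≤ x) (h₁ : x < 1)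
    (h : cos (2 * π * x) ≤ -1 / 2) : x ∈ Set.Icc (1 / 3) (2 / 3) := by
  have := pi_pos
  by_contra hx
  rw [Set.mem_Icc, not_and_or, not_le, not_le] at hx
  refine h.not_gt ?_
  rw [← cos_two_pi_div_three]
  rcases hx with hx | hx
  · exact cos_lt_cos_of_nonneg_of_le_pi (by positivity) (by nlinarith) (by nlinarith)
  · rw [← cos_two_pi_sub (2 * π * x)]
    exact cos_lt_cos_of_nonneg_of_le_pi (by nlinarith) (by nlinarith) (by nlinarith)

def circlePt (t : ℝ) : SPt :=
  ⟨Complex.exp (↑(2 * π * t) * Complex.I), Complex.norm_exp_ofReal_mul_I _⟩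

lemma coe_circlePt (t : ℝ) : (circlePt t : ℂ) = Complex.exp (↑(2 * π * t) * Complex.I) := rfl

lemma circlePt_eq_circlePt_iff {s t : ℝ} : circlePt s = circlePt t ↔ ∃ k : ℤ, s = t + k := by
  rw [Subtype.ext_iff, coe_circlePt, coe_circlePt, Complex.exp_eq_exp_iff_exists_int]
  refine exists_congr fun k => ⟨fun h => ?_, fun h => by rw [h]; push_cast; ring⟩
  have h' : ((s : ℂ) - (t + k)) * (2 * π * Complex.I) = 0 := by
    push_cast at h; linear_combination h
  have := (mul_eq_zero.mp h').resolve_right (by simp [pi_ne_zero, Complex.I_ne_zero])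
  exact_mod_cast sub_eq_zero.mp this

lemma circlePt_add_int (t : ℝ) (k : ℤ) : circlePt (t + k) = circlePt t :=
  circlePt_eq_circlePt_iff.mpr ⟨k, rfl⟩

lemma exists_circlePt_eq (z : SPt) : ∃ t, circlePt t = z := by
  refine ⟨Complex.arg z / (2 * π), Subtype.ext ?_⟩
  have h := Complex.norm_mul_exp_arg_mul_I (z : ℂ)
  rw [z.2, Complex.ofReal_one, one_mul] at h
  rw [coe_circlePt, mul_div_cancel₀ _ two_pi_pos.ne', h]

lemma coe_circlePt_add (s t : ℝ) : (circlePt (s + t) : ℂ) = circlePt s * circlePt t := by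
  simp only [coe_circlePt, ← Complex.exp_add]; push_cast; ring_nf

lemma coe_circlePt_pow (t : ℝ) (n : ℕ) : (circlePt t : ℂ) ^ n = circlePt (n * t) := by
  rw [coe_circlePt, coe_circlePt, ← Complex.exp_nat_mul]; push_cast; ring_nf

lemma inner_circlePt (s t : ℝ) :
    ⟪(circlePt s : ℂ), (circlePt t : ℂ)⟫ = cos (2 * π * (s - t)) := by
  simp only [Complex.inner, Complex.mul_re, Complex.conj_re, Complex.conj_im, coe_circlePt,
    Complex.exp_ofReal_mul_I_re, Complex.exp_ofReal_mul_I_im, mul_sub, cos_sub]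
  ring

lemma circlePt_add_circlePt_third (t : ℝ) :
    (circlePt t : ℂ) + circlePt (t + 1 / 3) = circlePt (t + 1 / 6) := by
  have h : (circlePt (-(1 / 6)) : ℂ) + circlePt (1 / 6) = 1 := by
    apply Complex.ext <;>
      simp only [Complex.add_re, Complex.add_im, coe_circlePt, Complex.exp_ofReal_mul_I_re,
        Complex.exp_ofReal_mul_I_im, Complex.one_re, Complex.one_im, mul_neg, cos_neg, sin_neg,
        show 2 * π * (1 / 6) = π / 3 by ring, cos_pi_div_three]
    · norm_num
    · ring
  calc (circlePt t : ℂ) + circlePt (t + 1 / 3)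
      = circlePt (t + 1 / 6) * (circlePt (-(1 / 6)) + circlePt (1 / 6)) := by
        rw [mul_add, ← coe_circlePt_add, ← coe_circlePt_add]; ring_nf
    _ = circlePt (t + 1 / 6) := by rw [h, mul_one]

lemma dist_circlePt_le (s t : ℝ) : dist (circlePt s : ℂ) (circlePt t) ≤ 2 * π * |s - t| := by
  rw [show s = t + (s - t) by ring, coe_circlePt_add, dist_eq_norm, ← mul_sub_one, norm_mul,
    (circlePt t).2, one_mul, coe_circlePt, mul_comm _ Complex.I, add_sub_cancel_left]
  refine Real.norm_exp_I_mul_ofReal_sub_one_le.trans_eq ?_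
  rw [Real.norm_eq_abs, abs_mul, abs_of_pos two_pi_pos]

lemma isCritChord_mk_iff {a b : SPt} : IsCritChord s(a, b) ↔ a ≠ b ∧ (a : ℂ) ^ 3 = (b : ℂ) ^ 3 := by
  rw [IsCritChord, chordMap, Sym2.map_mk, Sym2.mk_isDiag_iff, Sym2.mk_isDiag_iff]
  exact and_congr Iff.rfl Subtype.ext_iff

def critChord (t : ℝ) : Chord := s(circlePt t, circlePt (t + 1 / 3))

lemma critChord_add_int (t : ℝ) (k : ℤ) : critChord (t + k) = critChord t := by
  rw [critChord, critChord, circlePt_add_int, add_right_comm, circlePt_add_int]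

lemma isCritChord_critChord (t : ℝ) : IsCritChord (critChord t) := by
  refine isCritChord_mk_iff.mpr ⟨fun h => ?_, ?_⟩
  · obtain ⟨k, hk⟩ := circlePt_eq_circlePt_iff.mp h
    have : (3 * k : ℝ) = -1 := by linarith
    have : 3 * k = -1 := by exact_mod_cast this
    omega
  · rw [coe_circlePt_pow, coe_circlePt_pow, show ((3 : ℕ) : ℝ) * (t + 1 / 3) = 3 * t + (1 : ℤ) by
      push_cast; ring, circlePt_add_int]
    norm_num

lemma exists_eq_critChord {c : Chord} (hc : IsCritChord c) :
    ∃ t, c = critChord t := by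
  induction c using Sym2.ind with | _ a b => ?_
  obtain ⟨hab, h3⟩ := isCritChord_mk_iff.mp hc
  obtain ⟨s, rfl⟩ := exists_circlePt_eq a
  obtain ⟨r, rfl⟩ := exists_circlePt_eq b
  rw [coe_circlePt_pow, coe_circlePt_pow, ← Subtype.ext_iff, circlePt_eq_circlePt_iff] at h3
  obtain ⟨k, hk⟩ := h3
  -- `3s = 3r + k`; the residue of `k` mod 3 decides which endpoint comes first
  obtain ⟨j, rfl | rfl | rfl⟩ : ∃ j : ℤ, k = 3 * j ∨ k = 3 * j + 1 ∨ k = 3 * j + 2 :=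
    ⟨k / 3, by omega⟩
  · exact absurd (circlePt_eq_circlePt_iff.mpr ⟨j, by push_cast at hk; linarith⟩) hab
  · refine ⟨r, ?_⟩
    rw [critChord, Sym2.eq_swap,
      circlePt_eq_circlePt_iff (s := s) (t := r + 1 / 3) |>.mpr ⟨j, by push_cast at hk; linarith⟩]
  · refine ⟨s, ?_⟩
    rw [critChord, circlePt_eq_circlePt_iff (s := r) (t := s + 1 / 3) |>.mpr
      ⟨-(j + 1), by push_cast at hk ⊢; linarith⟩]

lemma inner_eq_of_isCritChord {a b : SPt} (h : IsCritChord s(a, b)) :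
    ⟪(a : ℂ), (b : ℂ)⟫ = -1 / 2 := by
  obtain ⟨t, ht⟩ := exists_eq_critChord h
  rcases Sym2.eq_iff.mp ht with ⟨rfl, rfl⟩ | ⟨rfl, rfl⟩
  · rw [inner_circlePt, show 2 * π * (t - (t + 1 / 3)) = -(2 * π / 3) by ring, cos_neg,
      cos_two_pi_div_three]
  · rw [inner_circlePt, show 2 * π * (t + 1 / 3 - t) = 2 * π / 3 by ring, cos_two_pi_div_three]

section CriticalSegment

variable {a b p : ℂ}

lemma inner_smul_add_smul_add (ha : ‖a‖ = 1) (hb : ‖b‖ = 1) (hab : ⟪a, b⟫ = -1 / 2) (s t : ℝ) :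
    ⟪s • a + t • b, a + b⟫ = (s + t) / 2 := by
  simp only [inner_add_left, inner_add_right, real_inner_smul_left, real_inner_self_eq_norm_sq,
    ha, hb, hab, real_inner_comm a b]
  ring

lemma norm_smul_add_smul_sq (ha : ‖a‖ = 1) (hb : ‖b‖ = 1) (hab : ⟪a, b⟫ = -1 / 2) (s t : ℝ) :
    ‖s • a + t • b‖ ^ 2 = s ^ 2 + t ^ 2 - s * t := by
  have haa : ⟪a, a⟫ = 1 := by rw [real_inner_self_eq_norm_sq, ha, one_pow]
  have hbb : ⟪b, b⟫ = 1 := by rw [real_inner_self_eq_norm_sq, hb, one_pow]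
  rw [← real_inner_self_eq_norm_sq]
  simp only [inner_add_left, inner_add_right, real_inner_smul_left, real_inner_smul_right,
    haa, hbb, hab, real_inner_comm a b]
  ring

lemma exists_smul_add_smul_eq (ha : ‖a‖ = 1) (hb : ‖b‖ = 1) (hab : ⟪a, b⟫ = -1 / 2) (p : ℂ) :
    ∃ s t : ℝ, s • a + t • b = p := by
  have hli : LinearIndependent ℝ ![a, b] := by
    refine LinearIndependent.pair_iff.mpr fun s t h => ?_
    have h1 := congrArg (⟪a, ·⟫) h
    have h2 := congrArg (⟪b, ·⟫) h
    simp only [inner_add_right, real_inner_smul_right, real_inner_self_eq_norm_sq, ha, hb, hab,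
      real_inner_comm a b, inner_zero_right] at h1 h2
    constructor <;> linarith
  have htop := hli.span_eq_top_of_card_eq_finrank (by simp [Complex.finrank_real_complex])
  rw [Matrix.range_cons, Matrix.range_cons, Matrix.range_empty, Set.union_empty,
    Set.singleton_union] at htop
  exact Submodule.mem_span_pair.mp (htop ▸ Submodule.mem_top)

lemma mem_segment_iff_inner (ha : ‖a‖ = 1) (hb : ‖b‖ = 1) (hab : ⟪a, b⟫ = -1 / 2) :
    p ∈ segment ℝ a b ↔ ⟪p, a + b⟫ = 1 / 2 ∧ ‖p‖ ≤ 1 := by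
  constructor
  · rintro ⟨s, t, hs, ht, hst, rfl⟩
    have hnorm := norm_smul_add_smul_sq ha hb hab s t
    refine ⟨by rw [inner_smul_add_smul_add ha hb hab, hst], ?_⟩
    nlinarith [norm_nonneg (s • a + t • b), mul_nonneg hs ht]
  · rintro ⟨hp, hp1⟩
    obtain ⟨s, t, rfl⟩ := exists_smul_add_smul_eq ha hb hab p
    have hnorm := norm_smul_add_smul_sq ha hb hab s t
    rw [inner_smul_add_smul_add ha hb hab] at hp
    have hst : s + t = 1 := by linarith
    have hsq : ‖s • a + t • b‖ ^ 2 ≤ 1 := by nlinarith [norm_nonneg (s • a + t • b)]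
    refine ⟨s, t, ?_, ?_, hst, rfl⟩ <;> nlinarith

lemma dist_lt_or_dist_lt_of_mem_segment (ha : ‖a‖ = 1) (hb : ‖b‖ = 1) (hab : ⟪a, b⟫ = -1 / 2)
    {x : ℂ} {ε : ℝ} (hp : p ∈ segment ℝ a b) (hx : ‖x‖ = 1) (hxp : dist x p < ε) :
    dist x a < 4 * ε ∨ dist x b < 4 * ε := by
  obtain ⟨s, t, hs, ht, hst, rfl⟩ := hp
  -- `‖s • a + t • b‖² = 1 - 3st`: a point of the chord close to the circle is close to an end
  have hnorm := norm_smul_add_smul_sq ha hb hab s t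
  have hlow : 1 - ε < ‖s • a + t • b‖ := by
    have := norm_sub_norm_le x (s • a + t • b)
    rw [← dist_eq_norm, hx] at this; linarith
  have hst3 : 3 * (s * t) < 2 * ε := by
    have hε : 0 < ε := dist_nonneg.trans_lt hxp
    rcases le_or_gt ε 1 with h1 | h1
    · nlinarith [norm_nonneg (s • a + t • b)]
    · nlinarith
  have hba : ‖b - a‖ ≤ 2 := (norm_sub_le b a).trans (by rw [ha, hb]; norm_num)
  rcases le_or_gt t (1 / 2) with htle | htgt
  · left
    have hqa : dist (s • a + t • b) a ≤ 2 * t := by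
      rw [dist_eq_norm, show s • a + t • b - a = t • (b - a) by
        rw [eq_sub_of_add_eq hst]; module, norm_smul, Real.norm_of_nonneg ht]
      nlinarith
    have := dist_triangle x (s • a + t • b) a
    nlinarith
  · right
    have hqb : dist (s • a + t • b) b ≤ 2 * s := by
      rw [dist_eq_norm, show s • a + t • b - b = s • (a - b) by
        rw [eq_sub_of_add_eq' hst]; module, norm_smul, Real.norm_of_nonneg hs, norm_sub_rev]
      nlinarith
    have := dist_triangle x (s • a + t • b) b
    nlinarith

end CriticalSegment

section CriticalChord

variable {a b u v : SPt}

lemma mem_chordSet_iff (h : IsCritChord s(a, b)) {p : ℂ} :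
    p ∈ chordSet s(a, b) ↔ ⟪p, (a + b : ℂ)⟫ = 1 / 2 ∧ ‖p‖ ≤ 1 :=
  mem_segment_iff_inner a.2 b.2 (inner_eq_of_isCritChord h)

lemma mem_Iarc_iff (h : IsCritChord s(u, v)) {z : SPt} :
    z ∈ Iarc s(u, v) ↔ 1 / 2 < ⟪(z : ℂ), (u + v : ℂ)⟫ := by
  have hz : ‖(z : ℂ)‖ = 1 := z.2
  refine ⟨fun hmem => ?_, fun hlt => ⟨fun hzc => ?_, ?_⟩⟩
  · obtain ⟨hzc, p, ⟨s, t, -, ht, -, rfl⟩, hp⟩ := hmem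
    rw [smul_zero, zero_add, mem_chordSet_iff h, real_inner_smul_left, norm_smul,
      Real.norm_of_nonneg ht, hz, mul_one] at hp
    rw [mem_chordSet_iff h, hz] at hzc
    refine lt_of_le_of_ne (le_of_not_gt fun hlt => ?_) fun heq => hzc ⟨heq.symm, le_rfl⟩
    rcases le_or_gt 0 ⟪(z : ℂ), (u + v : ℂ)⟫ with hpos | hneg
    · nlinarith [mul_le_mul_of_nonneg_right hp.2 hpos]
    · nlinarith [mul_nonpos_of_nonneg_of_nonpos ht hneg.le]
  · rw [mem_chordSet_iff h] at hzc
    exact hlt.ne' hzc.1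
  · set t := 1 / (2 * ⟪(z : ℂ), (u + v : ℂ)⟫)
    have ht : 0 < t := by positivity
    have ht1 : t < 1 := by rw [div_lt_one (by linarith)]; linarith
    refine ⟨t • (z : ℂ), ⟨1 - t, t, by linarith, ht.le, by ring, by rw [smul_zero, zero_add]⟩, ?_⟩
    rw [mem_chordSet_iff h, real_inner_smul_left, norm_smul, Real.norm_of_nonneg ht.le, hz,
      mul_one]
    exact ⟨by simp only [t]; field_simp, ht1.le⟩

lemma norm_add_of_isCritChord (h : IsCritChord s(a, b)) : ‖(a + b : ℂ)‖ = 1 := by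
  have := norm_smul_add_smul_sq a.2 b.2 (inner_eq_of_isCritChord h) 1 1
  rw [one_smul, one_smul] at this
  nlinarith [norm_nonneg (a + b : ℂ)]

lemma cross_of_inner_gt (hab : IsCritChord s(a, b)) (huv : IsCritChord s(u, v))
    (hne : s(a, b) ≠ s(u, v)) (hg : -1 / 2 < ⟪(a + b : ℂ), (u + v : ℂ)⟫) :
    Cross s(a, b) s(u, v) := by
  set m := (a + b : ℂ)
  set n := (u + v : ℂ)
  have hm : ⟪m, m⟫ = 1 := by rw [real_inner_self_eq_norm_sq, norm_add_of_isCritChord hab]; norm_num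
  have hn : ⟪n, n⟫ = 1 := by rw [real_inner_self_eq_norm_sq, norm_add_of_isCritChord huv]; norm_num
  have hg1 : 0 < 1 + ⟪m, n⟫ := by linarith
  set q := (1 / (2 * (1 + ⟪m, n⟫))) • (m + n)
  have hqm : ⟪q, m⟫ = 1 / 2 := by
    simp only [q, real_inner_smul_left, inner_add_left, hm, real_inner_comm m n]
    field_simp
  have hqn : ⟪q, n⟫ = 1 / 2 := by
    simp only [q, real_inner_smul_left, inner_add_left, hn]
    field_simp
    ring
  have hq : ‖q‖ < 1 := by
    have : ‖q‖ ^ 2 < 1 := by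
      rw [← real_inner_self_eq_norm_sq]
      simp only [q, real_inner_smul_left, real_inner_smul_right, inner_add_left, inner_add_right,
        hm, hn, real_inner_comm m n]
      field_simp
      nlinarith
    nlinarith [norm_nonneg q]
  refine ⟨hne, q, ⟨(mem_chordSet_iff hab).mpr ⟨hqm, hq.le⟩,
    (mem_chordSet_iff huv).mpr ⟨hqn, hq.le⟩⟩, ?_⟩
  simpa [openDisk] using hq

lemma not_cross_of_inner_lt (hab : IsCritChord s(a, b)) (hu : ⟪(u : ℂ), (a + b : ℂ)⟫ < 1 / 2)
    (hv : ⟪(v : ℂ), (a + b : ℂ)⟫ < 1 / 2) : ¬ Cross s(a, b) s(u, v) := by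
  rintro ⟨-, q, ⟨hq, ⟨s, t, hs, ht, hst, rfl⟩⟩, -⟩
  rw [mem_chordSet_iff hab, inner_add_left, real_inner_smul_left, real_inner_smul_left] at hq
  rcases hs.lt_or_eq with hs | rfl
  · nlinarith [mul_lt_mul_of_pos_left hu hs, mul_le_mul_of_nonneg_left hv.le ht]
  · rw [zero_add] at hst
    subst hst
    linarith [hq.1]

lemma one_lt_dist_of_isCritChord (h : IsCritChord s(a, b)) : 1 < dist (a : ℂ) b := by
  have := norm_smul_add_smul_sq a.2 b.2 (inner_eq_of_isCritChord h) 1 (-1)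
  rw [one_smul, neg_one_smul, ← sub_eq_add_neg, ← dist_eq_norm] at this
  nlinarith [dist_nonneg (x := (a : ℂ)) (y := b)]

lemma exists_eq_mk_dist_lt (huv : IsCritChord s(u, v)) {y : Chord} (hy : IsCritChord y) {ε : ℝ}
    (hd : chordDist y s(u, v) < ε) (hε : ε ≤ 1 / 8) :
    ∃ u' v' : SPt, y = s(u', v') ∧ dist (u' : ℂ) u < 4 * ε ∧ dist (v' : ℂ) v < 4 * ε := by
  induction y using Sym2.ind with | _ p q => ?_
  have near : ∀ x : SPt, (x : ℂ) ∈ chordSet s(u, v) →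
      dist (p : ℂ) x < 4 * ε ∨ dist (q : ℂ) x < 4 * ε := by
    intro x hx
    obtain ⟨w, hw, hwx⟩ := exists_dist_lt_of_hausdorffDist_lt' hx hd
      (hausdorffEDist_segment_ne_top _ _ _ _)
    rw [dist_comm] at hwx
    simpa only [dist_comm (x : ℂ)] using
      dist_lt_or_dist_lt_of_mem_segment p.2 q.2 (inner_eq_of_isCritChord hy) hw x.2 hwx
  have far := one_lt_dist_of_isCritChord huv
  have hu := near u (left_mem_segment ℝ _ _)
  have hv := near v (right_mem_segment ℝ _ _)
  rcases hu with hu | hu <;> rcases hv with hv | hv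
  · linarith [dist_triangle_left (u : ℂ) v p]
  · exact ⟨p, q, rfl, hu, hv⟩
  · exact ⟨q, p, Sym2.eq_swap, hu, hv⟩
  · linarith [dist_triangle_left (u : ℂ) v q]

lemma coe_iterate_sigmaS (n : ℕ) (z : SPt) : ((sigmaS 3)^[n] z : ℂ) = (z : ℂ) ^ 3 ^ n := by
  induction n with
  | zero => simp
  | succ n ih =>
    rw [Function.iterate_succ_apply']
    change ((sigmaS 3)^[n] z : ℂ) ^ 3 = _
    rw [ih, ← pow_mul, pow_succ]

lemma mem_critOrbit_iff (h : IsCritChord s(a, b)) {z : SPt} :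
    z ∈ critOrbit s(a, b) ↔ ∃ n, 1 ≤ n ∧ (z : ℂ) = (a : ℂ) ^ 3 ^ n := by
  have h3 := (isCritChord_mk_iff.mp h).2
  have hb : ∀ n, 1 ≤ n → (b : ℂ) ^ 3 ^ n = (a : ℂ) ^ 3 ^ n := fun n hn => by
    obtain ⟨m, rfl⟩ := Nat.exists_eq_add_of_le' hn
    rw [pow_succ', pow_mul, pow_mul, h3]
  constructor
  · rintro ⟨n, hn, x, hx, rfl⟩
    refine ⟨n, hn, ?_⟩
    rcases Sym2.mem_iff.mp hx with rfl | rfl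
    · exact coe_iterate_sigmaS n x
    · rw [coe_iterate_sigmaS, hb n hn]
  · rintro ⟨n, hn, hz⟩
    exact ⟨n, hn, a, Sym2.mem_mk_left a b, Subtype.ext (by rw [coe_iterate_sigmaS, hz])⟩

end CriticalChord

def OrbitMeetsIarc (c y : Chord) : Prop := (critOrbit c ∩ Iarc y).Nonempty

lemma isStrong_mk_iff {c y : Chord} :
    IsStrong s(c, y) ↔ IsPortrait s(c, y) ∧ OrbitMeetsIarc c y ∧ OrbitMeetsIarc y c := by
  simp only [IsStrong, IsWeak, OrbitMeetsIarc, Set.nonempty_iff_ne_empty]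
  refine and_congr_right fun hK => ⟨fun h => ?_, ?_⟩
  · by_contra h'
    exact h ⟨hK, c, y, rfl, by tauto⟩
  · rintro ⟨h1, h2⟩ ⟨-, c', y', heq, h⟩
    rcases Sym2.eq_iff.mp heq with ⟨rfl, rfl⟩ | ⟨rfl, rfl⟩ <;> tauto

lemma exists_forall_orbitMeetsIarc {c y : Chord} (hc : IsCritChord c) (hy : IsCritChord y)
    (h : OrbitMeetsIarc c y) :
    ∃ ε > 0, ∀ c' y', IsCritChord c' → IsCritChord y' → chordDist c' c < ε →
      chordDist y' y < ε → OrbitMeetsIarc c' y' := by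
  induction c using Sym2.ind with | _ a b => ?_
  induction y using Sym2.ind with | _ u v => ?_
  obtain ⟨z, hzo, hzi⟩ := h
  obtain ⟨N, hN, hz⟩ := (mem_critOrbit_iff hc).mp hzo
  rw [mem_Iarc_iff hy, hz] at hzi
  have hopen : IsOpen {p : ℂ × ℂ × ℂ | 1 / 2 < ⟪p.1 ^ 3 ^ N, p.2.1 + p.2.2⟫} :=
    isOpen_lt continuous_const (by fun_prop)
  obtain ⟨δ, hδ, hball⟩ := Metric.isOpen_iff.mp hopen ((a : ℂ), (u : ℂ), (v : ℂ)) hzi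
  refine ⟨min (1 / 8) (δ / 4), by positivity, fun c' y' hc' hy' hdc hdy => ?_⟩
  have h4 : 4 * min (1 / 8) (δ / 4) ≤ δ := by linarith [min_le_right (1 / 8 : ℝ) (δ / 4)]
  obtain ⟨a', b', rfl, ha', -⟩ := exists_eq_mk_dist_lt hc hc' hdc (min_le_left _ _)
  obtain ⟨u', v', rfl, hu', hv'⟩ := exists_eq_mk_dist_lt hy hy' hdy (min_le_left _ _)
  have hmem : ((a' : ℂ), (u' : ℂ), (v' : ℂ)) ∈ ball ((a : ℂ), (u : ℂ), (v : ℂ)) δ := by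
    rw [mem_ball, Prod.dist_eq, Prod.dist_eq]
    exact max_lt (by linarith) (max_lt (by linarith) (by linarith))
  refine ⟨⟨(a' : ℂ) ^ 3 ^ N, by rw [norm_pow, a'.2, one_pow]⟩,
    (mem_critOrbit_iff hc').mpr ⟨N, hN, rfl⟩, (mem_Iarc_iff hy').mpr (hball hmem)⟩

lemma portraitDist_mk (c y c' y' : Chord) :
    portraitDist s(c, y) s(c', y') =
      min (max (chordDist c c') (chordDist y y')) (max (chordDist c y') (chordDist y c')) :=
  rfl

theorem exists_forall_isStrong {K : Portrait} (hK : IsStrong K) :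
    ∃ ε > 0, ∀ K' ∈ CrP, portraitDist K' K < ε → IsStrong K' := by
  obtain ⟨c, y, rfl, hc, hy, -⟩ := hK.1
  obtain ⟨-, hcy, hyc⟩ := isStrong_mk_iff.mp hK
  obtain ⟨ε₁, hε₁, h₁⟩ := exists_forall_orbitMeetsIarc hc hy hcy
  obtain ⟨ε₂, hε₂, h₂⟩ := exists_forall_orbitMeetsIarc hy hc hyc
  refine ⟨min ε₁ ε₂, lt_min hε₁ hε₂, fun K' hK' hd => ?_⟩
  obtain ⟨c', y', rfl, hc', hy', -⟩ := id hK'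
  rw [portraitDist_mk] at hd
  refine isStrong_mk_iff.mpr ⟨hK', ?_⟩
  rcases min_lt_iff.mp hd with hd | hd <;>
    obtain ⟨⟨hd₁, hd₁'⟩, ⟨hd₂, hd₂'⟩⟩ := And.imp lt_min_iff.mp lt_min_iff.mp (max_lt_iff.mp hd)
  · exact ⟨h₁ c' y' hc' hy' hd₁ hd₂, h₂ y' c' hy' hc' hd₂' hd₁'⟩
  · exact ⟨h₂ c' y' hc' hy' hd₁' hd₂', h₁ y' c' hy' hc' hd₂ hd₁⟩

lemma exists_shift_solution {R : ℝ} (hR : 1 < R) (θ φ : ℝ) :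
    ∃ θ' φ' : ℝ, |θ' - θ| + |φ' - φ| ≤ 1 / (R - 1) ∧ (∃ p : ℤ, R * θ' = φ' + 1 / 6 + p) ∧
      (∃ q : ℤ, R * φ' = θ' + 1 / 6 + q) ∧ (θ = φ → θ' = φ') := by
  have hR2 : R ^ 2 - 1 ≠ 0 := by nlinarith
  -- `(θ', φ')` solves `Rθ' - φ' = 1/6 + p`, `Rφ' - θ' = 1/6 + q` for the integers `p`, `q`
  -- nearest to the values of the left-hand sides at `(θ, φ)`
  set p := round (R * θ - φ - 1 / 6)
  set q := round (R * φ - θ - 1 / 6)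
  set θ' := (R * (1 / 6 + p) + (1 / 6 + q)) / (R ^ 2 - 1)
  set φ' := (R * (1 / 6 + q) + (1 / 6 + p)) / (R ^ 2 - 1)
  have rounding : ∀ {d d' x : ℝ}, R * d = (round x - x) + d' → R * |d| ≤ 1 / 2 + |d'| := by
    intro d d' x h
    rw [← abs_of_pos (zero_lt_one.trans hR), ← abs_mul, h]
    linarith [abs_add_le (round x - x) d', abs_sub_comm x (round x), abs_sub_round x]
  have b₁ := rounding (d := θ' - θ) (d' := φ' - φ) (x := R * θ - φ - 1 / 6)
    (by simp only [θ', φ', p, q]; field_simp; ring)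
  have b₂ := rounding (d := φ' - φ) (d' := θ' - θ) (x := R * φ - θ - 1 / 6)
    (by simp only [θ', φ', p, q]; field_simp; ring)
  refine ⟨θ', φ', ?_, ⟨p, by simp only [θ', φ']; field_simp; ring⟩,
    ⟨q, by simp only [θ', φ']; field_simp; ring⟩, fun h => by simp only [θ', φ', p, q, h]⟩
  rw [le_div_iff₀ (by linarith)]
  linarith

lemma eq_or_cos_le_of_not_cross {θ φ : ℝ} (h : ¬ Cross (critChord θ) (critChord φ)) :
    critChord θ = critChord φ ∨ cos (2 * π * (φ - θ)) ≤ -1 / 2 := by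
  by_contra! hne
  refine h (cross_of_inner_gt (isCritChord_critChord θ) (isCritChord_critChord φ) hne.1 ?_)
  rw [circlePt_add_circlePt_third, circlePt_add_circlePt_third, inner_circlePt, ← cos_neg,
    show -(2 * π * (θ + 1 / 6 - (φ + 1 / 6))) = 2 * π * (φ - θ) by ring]
  exact hne.2

lemma not_cross_critChord {θ φ : ℝ} (h₁ : 1 / 3 < φ - θ) (h₂ : φ - θ < 2 / 3) :
    ¬ Cross (critChord θ) (critChord φ) := by
  refine not_cross_of_inner_lt (isCritChord_critChord θ) ?_ ?_ <;>
    rw [circlePt_add_circlePt_third, inner_circlePt] <;>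
    exact cos_two_pi_mul_lt_half (by linarith) (by linarith)

lemma orbitMeetsIarc_critChord {N : ℕ} (hN : 1 ≤ N) {θ φ : ℝ} {p : ℤ}
    (h : 3 ^ N * θ = φ + 1 / 6 + p) : OrbitMeetsIarc (critChord θ) (critChord φ) := by
  refine ⟨circlePt (φ + 1 / 6), (mem_critOrbit_iff (isCritChord_critChord θ)).mpr ⟨N, hN, ?_⟩,
    (mem_Iarc_iff (isCritChord_critChord φ)).mpr ?_⟩
  · rw [coe_circlePt_pow, Nat.cast_pow, Nat.cast_ofNat, h, circlePt_add_int]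
  · rw [circlePt_add_circlePt_third, inner_circlePt, sub_self, mul_zero, cos_zero]
    norm_num

lemma chordDist_critChord_le (s t : ℝ) :
    chordDist (critChord s) (critChord t) ≤ 2 * π * |s - t| := by
  refine (hausdorffDist_segment_le _ _ _ _).trans (max_le (dist_circlePt_le s t) ?_)
  simpa using dist_circlePt_le (s + 1 / 3) (t + 1 / 3)

lemma exists_isStrong_near {θ φ η ε : ℝ} (hη : 0 < η) (hε : 0 < ε)
    (h : θ = φ ∨ φ - θ ∈ Set.Icc (1 / 3 + η) (2 / 3 - η)) :
    ∃ θ' φ', |θ' - θ| < ε ∧ |φ' - φ| < ε ∧ IsStrong s(critChord θ', critChord φ') := by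
  obtain ⟨N, hN⟩ := pow_unbounded_of_one_lt (1 + 1 / ε + 1 / η) (by norm_num : (1 : ℝ) < 3)
  have hN1 : 1 ≤ N := Nat.one_le_iff_ne_zero.mpr fun h0 => by
    rw [h0, pow_zero] at hN
    linarith [one_div_pos.mpr hε, one_div_pos.mpr hη]
  have hR : (1 : ℝ) < 3 ^ N := by linarith [one_div_pos.mpr hε, one_div_pos.mpr hη]
  have hsmall : ∀ δ > 0, 1 / δ ≤ 1 / ε + 1 / η → 1 / ((3 : ℝ) ^ N - 1) < δ := fun δ hδ hδ' =>
    (one_div_lt (by linarith) hδ).mpr (by linarith [one_div_pos.mpr hε, one_div_pos.mpr hη])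
  have hρε := hsmall ε hε (by linarith [one_div_pos.mpr hη])
  have hρη := hsmall η hη (by linarith [one_div_pos.mpr hε])
  obtain ⟨θ', φ', hd, ⟨p, hp⟩, ⟨q, hq⟩, heq⟩ := exists_shift_solution hR θ φ
  have hθ := abs_nonneg (θ' - θ)
  have hφ := abs_nonneg (φ' - φ)
  refine ⟨θ', φ', by linarith, by linarith, isStrong_mk_iff.mpr
    ⟨⟨_, _, rfl, isCritChord_critChord θ', isCritChord_critChord φ', ?_⟩,
      orbitMeetsIarc_critChord hN1 hp, orbitMeetsIarc_critChord hN1 hq⟩⟩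
  rcases h with rfl | ⟨h₁, h₂⟩
  · rw [heq rfl]
    exact fun hc => hc.1 rfl
  · have := le_abs_self (θ' - θ); have := neg_abs_le (θ' - θ)
    have := le_abs_self (φ' - φ); have := neg_abs_le (φ' - φ)
    exact not_cross_critChord (by linarith) (by linarith)

lemma exists_angle_near_of_not_cross {θ φ η : ℝ} (h : ¬ Cross (critChord θ) (critChord φ))
    (hη₀ : 0 ≤ η) (hη : η ≤ 1 / 6) :
    ∃ φ₁ φ₀, critChord φ₁ = critChord φ ∧ |φ₀ - φ₁| ≤ η ∧
      (θ = φ₀ ∨ φ₀ - θ ∈ Set.Icc (1 / 3 + η) (2 / 3 - η)) := by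
  rcases eq_or_cos_le_of_not_cross h with heq | hcos
  · exact ⟨θ, θ, heq, by rwa [sub_self, abs_zero], Or.inl rfl⟩
  obtain ⟨d, hd_def⟩ : ∃ d, φ - θ - ⌊φ - θ⌋ = d := ⟨_, rfl⟩
  have hd : d ∈ Set.Icc (1 / 3) (2 / 3) := by
    rw [← hd_def, Int.self_sub_floor]
    refine mem_Icc_of_cos_two_pi_mul_le (Int.fract_nonneg _) (Int.fract_lt_one _) ?_
    rwa [← Int.self_sub_floor, mul_sub, mul_comm (2 * π) (⌊φ - θ⌋ : ℝ), cos_sub_int_mul_two_pi]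
  refine ⟨θ + d, θ + max (1 / 3 + η) (min d (2 / 3 - η)), ?_, ?_, Or.inr ?_⟩
  · rw [← hd_def, show θ + (φ - θ - ⌊φ - θ⌋) = φ + ((-⌊φ - θ⌋ : ℤ) : ℝ) by push_cast; ring,
      critChord_add_int]
  · rw [add_sub_add_left_eq_sub, abs_le]
    constructor
    · linarith [le_max_right (1 / 3 + η) (min d (2 / 3 - η)),
        le_min (by linarith : d - η ≤ d) (by linarith [hd.2] : d - η ≤ 2 / 3 - η)]
    · linarith [max_le (by linarith [hd.1] : 1 / 3 + η ≤ d + η)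
        ((min_le_left d (2 / 3 - η)).trans (by linarith : d ≤ d + η))]
  · rw [add_sub_cancel_left]
    exact ⟨le_max_left _ _, max_le (by linarith) (min_le_right _ _)⟩

theorem exists_isStrong_portraitDist_lt {K : Portrait} (hK : K ∈ CrP) {ε : ℝ} (hε : 0 < ε) :
    ∃ K', IsStrong K' ∧ portraitDist K' K < ε := by
  obtain ⟨c, y, rfl, hc, hy, hcy⟩ := hK
  obtain ⟨θ, rfl⟩ := exists_eq_critChord hc
  obtain ⟨φ, rfl⟩ := exists_eq_critChord hy
  set δ := ε / (4 * π)
  have hδ : 0 < δ := by positivity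
  obtain ⟨φ₁, φ₀, hφ₁, hφ₀, h⟩ :=
    exists_angle_near_of_not_cross hcy (le_min (by norm_num) hδ.le) (min_le_left (1 / 6) δ)
  obtain ⟨θ', φ', hθ', hφ', hK'⟩ := exists_isStrong_near (lt_min (by norm_num) hδ) hδ h
  have h2π : 2 * π * (2 * δ) = ε := by simp only [δ]; field_simp; ring
  refine ⟨_, hK', ?_⟩
  rw [portraitDist_mk, ← hφ₁]
  refine (min_le_left _ _).trans_lt (max_lt ?_ ?_)
  · calc chordDist (critChord θ') (critChord θ) ≤ 2 * π * |θ' - θ| := chordDist_critChord_le _ _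
      _ < ε := by rw [← h2π]; gcongr; linarith
  · calc chordDist (critChord φ') (critChord φ₁) ≤ 2 * π * |φ' - φ₁| := chordDist_critChord_le _ _
      _ ≤ 2 * π * (|φ' - φ₀| + |φ₀ - φ₁|) := by gcongr; exact abs_sub_le _ _ _
      _ < ε := by rw [← h2π]; gcongr; linarith [min_le_right (1 / 6) δ]

end CubicPortrait

/-- the strong critical portraits form an open dense subset of
`CrP`, and the weak critical portraits form a closed nowhere dense subset of
`CrP` (all notions relative to the metric `portraitDist` on `CrP`). -/
theorem stmt6 :
    (∀ K : Portrait, IsStrong K →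
      ∃ ε > (0 : ℝ), ∀ K' ∈ CrP, portraitDist K' K < ε → IsStrong K') ∧
    (∀ K ∈ CrP, ∀ ε > (0 : ℝ), ∃ K' : Portrait, IsStrong K' ∧ portraitDist K' K < ε) ∧
    (∀ K ∈ CrP, (∀ ε > (0 : ℝ), ∃ K' : Portrait, IsWeak K' ∧ portraitDist K' K < ε) →
      IsWeak K) ∧
    (∀ K : Portrait, IsWeak K → ∀ ε > (0 : ℝ),
      ∃ K' ∈ CrP, portraitDist K' K < ε ∧ ¬ IsWeak K') := by
  refine ⟨fun K hK => CubicPortrait.exists_forall_isStrong hK,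
    fun K hK ε hε => CubicPortrait.exists_isStrong_portraitDist_lt hK hε, ?_, ?_⟩
  · intro K hK hweak
    by_contra hK'
    obtain ⟨ε, hε, hstrong⟩ := CubicPortrait.exists_forall_isStrong ⟨hK, hK'⟩
    obtain ⟨K', hK'w, hd⟩ := hweak ε hε
    exact (hstrong K' hK'w.1 hd).2 hK'w
  · intro K hK ε hε
    obtain ⟨K', hK', hd⟩ := CubicPortrait.exists_isStrong_portraitDist_lt hK.1 hε
    exact ⟨K', hK'.1, hd, hK'.2⟩
end
end
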